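/- Fix an index pair a ≠ b in [n] and nonnegative reals u_1,...,u_n. Let v be obtained from u by replacing both u_a and u_b with their average (u_a+u_b)/2. Then for every r, the elementary symmetric polynomial satisfies e_r(u) ≤ e_r(v). -/

import Mathlib

namespace Multiset

variable {R : Type*}

theorem esymm_cons_succ [CommSemiring R] (x : R) (s : Multiset R) (k : ℕ) :
    (x ::ₘ s).esymm (k + 1) = s.esymm (k + 1) + x * s.esymm k := by
  simp [esymm, powersetCard_cons, map_map, sum_map_mul_left]

theorem esymm_zero [CommSemiring R] (s : Multiset R) : s.esymm 0 = 1 := by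
  simp [esymm]

variable [CommSemiring R] [PartialOrder R] [IsOrderedRing R]

theorem esymm_nonneg {s : Multiset R} (hs : ∀ x ∈ s, 0 ≤ x) (k : ℕ) : 0 ≤ s.esymm k :=
  sum_nonneg fun _ hp => by
    obtain ⟨t, ht, rfl⟩ := mem_map.1 hp
    exact prod_nonneg fun x hx => hs x (mem_of_le (mem_powersetCard.1 ht).1 hx)

/-- `esymm (x ::ₘ y ::ₘ s) k` is affine in `x + y` and `x * y`, with nonnegative coefficient of
`x * y`; so it grows when `x * y` does and `x + y` is kept. -/
theorem esymm_cons_cons_le {s : Multiset R} (hs : ∀ x ∈ s, 0 ≤ x) {x y x' y' : R}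
    (hsum : x + y = x' + y') (hprod : x * y ≤ x' * y') (k : ℕ) :
    (x ::ₘ y ::ₘ s).esymm k ≤ (x' ::ₘ y' ::ₘ s).esymm k := by
  rcases k with _ | _ | k
  · simp only [esymm_zero, le_refl]
  · have expand (x y : R) : (x ::ₘ y ::ₘ s).esymm 1 = s.esymm 1 + (x + y) := by
      rw [← zero_add 1, esymm_cons_succ, esymm_cons_succ, esymm_zero, esymm_zero]
      ring
    rw [expand, expand, hsum]
  · have expand (x y : R) : (x ::ₘ y ::ₘ s).esymm (k + 2) =
        s.esymm (k + 2) + (x + y) * s.esymm (k + 1) + x * y * s.esymm k := by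
      simp only [esymm_cons_succ]
      ring
    rw [expand, expand, hsum]
    gcongr
    exact esymm_nonneg hs k

end Multiset

theorem Finset.map_val_eq_cons_cons {α β : Type*} [DecidableEq α] {s : Finset α} {a b : α}
    (ha : a ∈ s) (hb : b ∈ s) (hab : a ≠ b) (f : α → β) :
    s.val.map f = f a ::ₘ f b ::ₘ ((s.erase a).erase b).val.map f := by
  rw [← Multiset.map_cons, ← Multiset.map_cons, erase_val, erase_val,
    Multiset.cons_erase (Multiset.mem_erase_of_ne hab.symm |>.2 hb), Multiset.cons_erase ha]

open Finset in
/-- Pairwise averaging does not decrease elementary symmetric polynomials of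
nonnegative reals. -/
theorem esymm_le_of_pair_average (n r : ℕ) (a b : Fin n) (hab : a ≠ b)
    (u : Fin n → ℝ) (hu : ∀ i, 0 ≤ u i)
    (v : Fin n → ℝ)
    (hv : v = fun i => if i = a ∨ i = b then (u a + u b) / 2 else u i) :
    ∑ S ∈ Finset.univ.powersetCard r, ∏ i ∈ S, u i
      ≤ ∑ S ∈ Finset.univ.powersetCard r, ∏ i ∈ S, v i := by
  set rest := ((univ : Finset (Fin n)).erase a).erase b
  have hv_rest : rest.val.map v = rest.val.map u :=
    Multiset.map_congr rfl fun i (hi : i ∈ rest) => by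
      obtain ⟨hib, hia, -⟩ := by simpa only [rest, mem_erase] using hi
      simp [hv, hia, hib]
  rw [← esymm_map_val, ← esymm_map_val, map_val_eq_cons_cons (mem_univ a) (mem_univ b) hab,
    map_val_eq_cons_cons (mem_univ a) (mem_univ b) hab v, hv_rest]
  refine Multiset.esymm_cons_cons_le (by simp [hu]) (by simp [hv]) ?_ r
  simp only [hv, true_or, or_true, if_true]
  nlinarith [sq_nonneg (u a - u b)]
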